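/- Let u₀ : ℝ → ℝ be continuous, bounded and integrable, let ψ₀(x) = exp( −½ ∫₀^x u₀(y) dy ), so that ψ₀′ = −½ u₀ ψ₀, and for ε > 0 define u_ε(x) = −2 (G_ε * ψ₀′)(x) / (G_ε * ψ₀)(x). Then: (i) sup_{x∈ℝ, ε>0} |u_ε(x)| ≤ ‖u₀‖_{∞} exp(‖u₀‖_{L¹(ℝ)}); (ii) for every x ∈ ℝ, u_ε(x) → u₀(x) as ε → 0⁺; and (iii) for every t > 0 and x ∈ ℝ, ∫_ℝ G_t(x−y) u_ε(y) dy → ∫_ℝ G_t(x−y) u₀(y) dy as ε → 0⁺. -/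

import Mathlib

/-!
Write `L = ‖u₀‖_{L¹}`. Since `|∫₀ˣ u₀| ≤ L`, the function `ψ₀` takes values in
`[e^{-L/2}, e^{L/2}]` and `|ψ₀′| ≤ ½ ‖u₀‖_∞ e^{L/2}`. Convolution with the probability density
`G_ε` preserves such bounds, which gives (i) for the quotient `u_ε`. After the substitution
`y = x - 2√ε z` one has `(G_ε * f)(x) = ∫ G_{1/4}(z) f(x - 2√ε z) dz`, so for bounded continuous `f`
dominated convergence gives `(G_ε * f)(x) → f(x)`; applied to `ψ₀′` and `ψ₀` this yields (ii),
as `-2ψ₀′/ψ₀ = u₀`. Finally (iii) is dominated convergence against `G_t`, using (i) and (ii).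
-/

open MeasureTheory Real Filter

/-- The heat kernel on `ℝ`: `G t x = (4πt)^(-1/2) exp(-x²/(4t))`. -/
noncomputable def G (t x : ℝ) : ℝ :=
  (4 * Real.pi * t) ^ (-(1:ℝ)/2) * Real.exp (-x ^ 2 / (4 * t))

/-- `ψ₀(x) = exp(-½ ∫₀ˣ u₀(y) dy)`, with the signed-interval convention for `x < 0`. -/
noncomputable def psi0 (u₀ : ℝ → ℝ) (x : ℝ) : ℝ :=
  Real.exp (-(1/2) * ∫ y in (0:ℝ)..x, u₀ y)

/-- `ψ₀′ = -½ u₀ ψ₀`. -/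
noncomputable def psi0' (u₀ : ℝ → ℝ) (x : ℝ) : ℝ :=
  -(1/2) * u₀ x * psi0 u₀ x

/-- `u_ε(x) = -2 (G_ε * ψ₀′)(x) / (G_ε * ψ₀)(x)`. -/
noncomputable def uEps (u₀ : ℝ → ℝ) (ε x : ℝ) : ℝ :=
  -2 * (∫ y : ℝ, G ε (x - y) * psi0' u₀ y) / (∫ y : ℝ, G ε (x - y) * psi0 u₀ y)

open Set Topology

section HeatKernel

variable {t : ℝ}

lemma G_nonneg (ht : 0 ≤ t) (x : ℝ) : 0 ≤ G t x := by
  unfold G; positivity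

lemma continuous_G (t : ℝ) : Continuous (G t) := by
  unfold G; fun_prop

lemma G_eq_mul_exp_neg_mul_sq (t x : ℝ) :
    G t x = (4 * π * t) ^ (-(1:ℝ)/2) * exp (-(4 * t)⁻¹ * x ^ 2) := by
  unfold G; congr 2; ring

lemma integrable_G (ht : 0 < t) : Integrable (G t) := by
  simp_rw [funext (G_eq_mul_exp_neg_mul_sq t)]
  exact (integrable_exp_neg_mul_sq (by positivity)).const_mul _

lemma integral_G (ht : 0 < t) : ∫ x, G t x = 1 := by
  simp_rw [G_eq_mul_exp_neg_mul_sq]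
  rw [integral_const_mul, integral_gaussian, div_inv_eq_mul,
    show (-(1:ℝ)/2) = -(1/2) by norm_num, rpow_neg (by positivity), ← sqrt_eq_rpow,
    mul_left_comm π, mul_assoc]
  exact inv_mul_cancel₀ (sqrt_pos.2 (by positivity)).ne'

lemma integral_G_sub (ht : 0 < t) (x : ℝ) : ∫ y, G t (x - y) = 1 := by
  rw [integral_sub_left_eq_self (G t) volume x, integral_G ht]

lemma mul_G_mul_sq_mul {c : ℝ} (hc : 0 < c) (ht : 0 < t) (x : ℝ) :
    c * G (c ^ 2 * t) (c * x) = G t x := by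
  have hroot : (c ^ 2) ^ (-(1:ℝ)/2) = c⁻¹ := by
    rw [show (-(1:ℝ)/2) = -(1/2) by norm_num, rpow_neg (by positivity), ← sqrt_eq_rpow,
      sqrt_sq hc.le]
  unfold G
  rw [show 4 * π * (c ^ 2 * t) = c ^ 2 * (4 * π * t) by ring,
    mul_rpow (by positivity) (by positivity), hroot,
    show -(c * x) ^ 2 / (4 * (c ^ 2 * t)) = -x ^ 2 / (4 * t) by field_simp]
  field_simp

end HeatKernel

noncomputable def heatConv (t : ℝ) (f : ℝ → ℝ) (x : ℝ) : ℝ :=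
  ∫ y, G t (x - y) * f y

lemma heatConv_eq_integral_G_mul_comp (f : ℝ → ℝ) {ε : ℝ} (hε : 0 < ε) (x : ℝ) :
    heatConv ε f x = ∫ z, G (1/4) z * f (x - 2 * √ε * z) := by
  set c := 2 * √ε
  have hc : 0 < c := by positivity
  have hε_eq : ε = c ^ 2 * (1/4) := by
    rw [mul_pow, sq_sqrt hε.le]; ring
  calc heatConv ε f x = ∫ y, G ε y * f (x - y) := by
        rw [← integral_sub_left_eq_self (fun y => G ε y * f (x - y)) volume x]
        simp only [heatConv, sub_sub_cancel]
    _ = c * ∫ z, G ε (c * z) * f (x - c * z) := by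
        rw [Measure.integral_comp_mul_left (fun y => G ε y * f (x - y)),
          abs_of_pos (inv_pos.2 hc), smul_eq_mul, mul_inv_cancel_left₀ hc.ne']
    _ = ∫ z, G (1/4) z * f (x - c * z) := by
        rw [← integral_const_mul]
        congr 1 with z
        rw [← mul_assoc, hε_eq, mul_G_mul_sq_mul hc (by norm_num)]

section BoundedContinuous

variable {f : ℝ → ℝ} {A t : ℝ}

lemma integrable_G_sub_mul (ht : 0 < t) (hf : AEStronglyMeasurable f) (hA : ∀ y, |f y| ≤ A)
    (x : ℝ) : Integrable fun y => G t (x - y) * f y :=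
  ((integrable_G ht).comp_sub_left x).mul_bdd hf (ae_of_all _ hA)

lemma abs_heatConv_le (ht : 0 < t) (hA : ∀ y, |f y| ≤ A) (x : ℝ) : |heatConv t f x| ≤ A :=
  calc |heatConv t f x| = ‖∫ y, G t (x - y) * f y‖ := rfl
    _ ≤ ∫ y, G t (x - y) * A :=
        norm_integral_le_of_norm_le (((integrable_G ht).comp_sub_left x).mul_const A)
          (ae_of_all _ fun y => by
            rw [norm_mul, Real.norm_of_nonneg (G_nonneg ht.le _)]
            exact mul_le_mul_of_nonneg_left (hA y) (G_nonneg ht.le _))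
    _ = A := by rw [integral_mul_const, integral_G_sub ht, one_mul]

lemma le_heatConv (ht : 0 < t) (hf : Continuous f) (hA : ∀ y, |f y| ≤ A) {m : ℝ}
    (hm : ∀ y, m ≤ f y) (x : ℝ) : m ≤ heatConv t f x :=
  calc m = ∫ y, G t (x - y) * m := by rw [integral_mul_const, integral_G_sub ht, one_mul]
    _ ≤ heatConv t f x :=
        integral_mono (((integrable_G ht).comp_sub_left x).mul_const m)
          (integrable_G_sub_mul ht hf.aestronglyMeasurable hA x)
          fun y => mul_le_mul_of_nonneg_left (hm y) (G_nonneg ht.le _)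

lemma continuous_integral_G_mul_comp (ht : 0 < t) (hf : Continuous f) (hA : ∀ y, |f y| ≤ A) :
    Continuous fun p : ℝ × ℝ => ∫ z, G t z * f (p.2 - p.1 * z) := by
  have hG := continuous_G t
  refine continuous_of_dominated (bound := fun z => G t z * A)
    (fun p => (by fun_prop : Continuous fun z => G t z * f (p.2 - p.1 * z)).aestronglyMeasurable)
    (fun p => ae_of_all _ fun z => ?_) ((integrable_G ht).mul_const A)
    (ae_of_all _ fun z => by fun_prop)
  rw [norm_mul, Real.norm_of_nonneg (G_nonneg ht.le _)]
  exact mul_le_mul_of_nonneg_left (hA _) (G_nonneg ht.le _)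

lemma continuous_heatConv (hf : Continuous f) (hA : ∀ y, |f y| ≤ A) {ε : ℝ} (hε : 0 < ε) :
    Continuous (heatConv ε f) := by
  simp_rw [funext (heatConv_eq_integral_G_mul_comp f hε)]
  exact (continuous_integral_G_mul_comp (by norm_num) hf hA).comp
    (continuous_const.prodMk continuous_id)

lemma tendsto_heatConv_self (hf : Continuous f) (hA : ∀ y, |f y| ≤ A) (x : ℝ) :
    Tendsto (fun ε => heatConv ε f x) (𝓝[>] 0) (𝓝 (f x)) := by
  have hlim : Tendsto (fun ε => ∫ z, G (1/4) z * f (x - 2 * √ε * z)) (𝓝 0) (𝓝 (f x)) := by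
    have h0 : ∫ z, G (1/4) z * f (x - 2 * √0 * z) = f x := by
      simp only [sqrt_zero, mul_zero, zero_mul, sub_zero, integral_mul_const,
        integral_G (show (0:ℝ) < 1/4 by norm_num), one_mul]
    rw [← h0]
    exact ((continuous_integral_G_mul_comp (by norm_num) hf hA).comp
      (by fun_prop : Continuous fun ε : ℝ => (2 * √ε, x))).tendsto 0
  refine (hlim.mono_left nhdsWithin_le_nhds).congr' ?_
  filter_upwards [self_mem_nhdsWithin] with ε hε
  exact (heatConv_eq_integral_G_mul_comp f hε x).symm

end BoundedContinuous

lemma tendsto_heatConv_of_tendsto {ι : Type*} {l : Filter ι} [l.IsCountablyGenerated]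
    {g : ι → ℝ → ℝ} {f : ℝ → ℝ} {C t : ℝ} (ht : 0 < t)
    (hmeas : ∀ᶠ i in l, AEStronglyMeasurable (g i)) (hbound : ∀ᶠ i in l, ∀ y, |g i y| ≤ C)
    (hlim : ∀ y, Tendsto (fun i => g i y) l (𝓝 (f y))) (x : ℝ) :
    Tendsto (fun i => heatConv t (g i) x) l (𝓝 (heatConv t f x)) := by
  have hG := (integrable_G ht).comp_sub_left x
  refine tendsto_integral_filter_of_dominated_convergence (fun y => G t (x - y) * C)
    (hmeas.mono fun i hi => hG.aestronglyMeasurable.mul hi)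
    (hbound.mono fun i hi => ae_of_all _ fun y => ?_) (hG.mul_const C)
    (ae_of_all _ fun y => (hlim y).const_mul _)
  rw [norm_mul, Real.norm_of_nonneg (G_nonneg ht.le _)]
  exact mul_le_mul_of_nonneg_left (hi y) (G_nonneg ht.le _)

lemma abs_intervalIntegral_le_integral_abs {u : ℝ → ℝ} (hu : Integrable u) (a b : ℝ) :
    |∫ y in a..b, u y| ≤ ∫ y, |u y| :=
  calc |∫ y in a..b, u y| ≤ ∫ y in uIoc a b, |u y| := by
        simpa only [Real.norm_eq_abs] using
          intervalIntegral.norm_integral_le_integral_norm_uIoc (f := u) (μ := volume)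
    _ ≤ ∫ y, |u y| := setIntegral_le_integral hu.abs (ae_of_all _ fun y => abs_nonneg (u y))

section MollifiedInitialCondition

variable {u₀ : ℝ → ℝ} {M L : ℝ}

lemma continuous_psi0 (hc : Continuous u₀) : Continuous (psi0 u₀) := by
  have := intervalIntegral.continuous_primitive (μ := volume)
    (fun a b => hc.intervalIntegrable a b) 0
  unfold psi0; fun_prop

lemma continuous_psi0' (hc : Continuous u₀) : Continuous (psi0' u₀) := by
  have := continuous_psi0 hc
  unfold psi0'; fun_prop

lemma psi0_pos (x : ℝ) : 0 < psi0 u₀ x := exp_pos _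

lemma uEps_eq_heatConv_div (ε x : ℝ) :
    uEps u₀ ε x = -2 * heatConv ε (psi0' u₀) x / heatConv ε (psi0 u₀) x := rfl

variable (hL : ∀ x, |∫ y in (0:ℝ)..x, u₀ y| ≤ L)
include hL

lemma psi0_le (x : ℝ) : psi0 u₀ x ≤ exp (L / 2) := by
  have := (abs_le.1 (hL x)).1
  unfold psi0; gcongr; linarith

lemma exp_neg_le_psi0 (x : ℝ) : exp (-(L / 2)) ≤ psi0 u₀ x := by
  have := (abs_le.1 (hL x)).2
  unfold psi0; gcongr; linarith

lemma abs_psi0_le (x : ℝ) : |psi0 u₀ x| ≤ exp (L / 2) := by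
  rw [abs_of_pos (psi0_pos x)]
  exact psi0_le hL x

lemma abs_psi0'_le (hM : ∀ x, |u₀ x| ≤ M) (x : ℝ) : |psi0' u₀ x| ≤ M / 2 * exp (L / 2) := by
  have hM0 : 0 ≤ M := (abs_nonneg _).trans (hM x)
  rw [psi0', abs_mul, abs_mul, abs_neg, abs_of_pos (by norm_num : (0:ℝ) < 1/2)]
  calc 1 / 2 * |u₀ x| * |psi0 u₀ x| ≤ 1 / 2 * M * exp (L / 2) := by
        gcongr
        · exact hM x
        · exact abs_psi0_le hL x
    _ = M / 2 * exp (L / 2) := by ring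

variable (hc : Continuous u₀)
include hc

lemma heatConv_psi0_pos {ε : ℝ} (hε : 0 < ε) (x : ℝ) : 0 < heatConv ε (psi0 u₀) x :=
  (exp_pos _).trans_le
    (le_heatConv hε (continuous_psi0 hc) (abs_psi0_le hL) (exp_neg_le_psi0 hL) x)

variable (hM : ∀ x, |u₀ x| ≤ M)
include hM

lemma abs_uEps_le {ε : ℝ} (hε : 0 < ε) (x : ℝ) : |uEps u₀ ε x| ≤ M * exp L := by
  have hnum := abs_heatConv_le hε (abs_psi0'_le hL hM) x
  have hden := le_heatConv hε (continuous_psi0 hc) (abs_psi0_le hL) (exp_neg_le_psi0 hL) x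
  have hM0 : 0 ≤ M := (abs_nonneg _).trans (hM x)
  rw [uEps_eq_heatConv_div, abs_div, abs_mul, abs_neg, abs_two,
    abs_of_pos (heatConv_psi0_pos hL hc hε x)]
  calc 2 * |heatConv ε (psi0' u₀) x| / heatConv ε (psi0 u₀) x
      ≤ 2 * (M / 2 * exp (L / 2)) / exp (-(L / 2)) := by gcongr
    _ = M * exp L := by
        rw [exp_neg, div_inv_eq_mul, show exp L = exp (L / 2) * exp (L / 2) by
          rw [← exp_add, add_halves]]
        ring

lemma tendsto_uEps (x : ℝ) : Tendsto (fun ε => uEps u₀ ε x) (𝓝[>] 0) (𝓝 (u₀ x)) := by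
  have hnum := tendsto_heatConv_self (continuous_psi0' hc) (abs_psi0'_le hL hM) x
  have hden := tendsto_heatConv_self (continuous_psi0 hc) (abs_psi0_le hL) x
  have hlim := (hnum.const_mul (-2)).div hden (psi0_pos x).ne'
  rwa [psi0', show -2 * (-(1 / 2) * u₀ x * psi0 u₀ x) / psi0 u₀ x = u₀ x by
    field_simp [(psi0_pos x).ne']] at hlim

lemma continuous_uEps {ε : ℝ} (hε : 0 < ε) : Continuous (uEps u₀ ε) :=
  ((continuous_heatConv (continuous_psi0' hc) (abs_psi0'_le hL hM) hε).const_mul (-2)).div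
    (continuous_heatConv (continuous_psi0 hc) (abs_psi0_le hL) hε)
    fun x => (heatConv_psi0_pos hL hc hε x).ne'

end MollifiedInitialCondition

theorem mollified_initial_condition_convergence
    (u₀ : ℝ → ℝ) (hc : Continuous u₀) (hb : ∃ M, ∀ x, |u₀ x| ≤ M)
    (hi : MeasureTheory.Integrable u₀) :
    (∀ x ε : ℝ, 0 < ε →
      |uEps u₀ ε x| ≤ (⨆ z : ℝ, |u₀ z|) * Real.exp (∫ z : ℝ, |u₀ z|)) ∧
    (∀ x : ℝ, Filter.Tendsto (fun ε => uEps u₀ ε x)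
      (nhdsWithin 0 (Set.Ioi 0)) (nhds (u₀ x))) ∧
    (∀ t x : ℝ, 0 < t →
      Filter.Tendsto (fun ε => ∫ y : ℝ, G t (x - y) * uEps u₀ ε y)
        (nhdsWithin 0 (Set.Ioi 0)) (nhds (∫ y : ℝ, G t (x - y) * u₀ y))) := by
  obtain ⟨M, hM⟩ := hb
  have hsup : ∀ x, |u₀ x| ≤ ⨆ z, |u₀ z| := le_ciSup ⟨M, forall_mem_range.2 hM⟩
  have hL : ∀ x, |∫ y in (0:ℝ)..x, u₀ y| ≤ ∫ z, |u₀ z| :=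
    abs_intervalIntegral_le_integral_abs hi 0
  refine ⟨fun x ε hε => abs_uEps_le hL hc hsup hε x, tendsto_uEps hL hc hsup,
    fun t x ht => ?_⟩
  exact tendsto_heatConv_of_tendsto (l := 𝓝[>] 0) ht
    (eventually_mem_nhdsWithin.mono fun ε hε =>
      (continuous_uEps hL hc hsup hε).aestronglyMeasurable)
    (eventually_mem_nhdsWithin.mono fun ε hε => abs_uEps_le hL hc hsup hε)
    (tendsto_uEps hL hc hsup) x
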